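/- Let f_n = k_n a_n k'_n ∈ GL(d,ℝ) with k_n, k'_n orthogonal and a_n = diag(a_n^1 ≥ ... ≥ a_n^d > 0), a_n^i = o(a_n^1) for i > 1, and k'_n^{-1} e_1 → z. Then for x, y ∈ ℝ^d \ {0} with ⟨z,x⟩ ≠ 0 and ⟨z,y⟩ ≠ 0, the projective distances satisfy δ(f_n·[x], f_n·[y]) → 0; moreover δ(f_n·[x], f_n·[y])/δ([x],[y]) ≤ d² (a_n²/a_n¹) / (|⟨k'_n x/‖x‖, e_1⟩||⟨k'_n y/‖y‖, e_1⟩|). -/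

import Mathlib

/-!
Write `f = k a k'`. The orthogonal factors preserve `δ`, so only the diagonal `a` matters. By
Lagrange's identity `‖a u ∧ a v‖²` is the sum of the squared minors `a_i a_j (u_i v_j - u_j v_i)`,
each scaled by at most `a¹ a²`, while `‖a u‖ ≥ a¹ |u_1|`; this gives the bound even with
constant `1 ≤ d²`. Since `⟨k' x, e_1⟩ = ⟨x, k'⁻¹ e_1⟩ → ⟨x, z⟩ ≠ 0`, the factors multiplying
`δ(f·[x], f·[y])` stay away from `0` while `a²/a¹ → 0`.
-/

open Matrix Filter Topology RealInnerProductSpace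

noncomputable def eu (d : ℕ) (x : Fin d → ℝ) : EuclideanSpace ℝ (Fin d) := WithLp.toLp 2 x

/-- The metric `δ([u],[v]) = ‖u ∧ v‖/(‖u‖‖v‖)` on `ℙ^{d-1}`, computed on representatives,
with `‖u ∧ v‖² = ‖u‖²‖v‖² - ⟨u,v⟩²`. -/
noncomputable def pdist (d : ℕ) (u v : Fin d → ℝ) : ℝ :=
  Real.sqrt (‖eu d u‖ ^ 2 * ‖eu d v‖ ^ 2 - (inner ℝ (eu d u) (eu d v) : ℝ) ^ 2) /
    (‖eu d u‖ * ‖eu d v‖)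

lemma tendsto_zero_of_mul_le {α : Type*} {l : Filter α} {p c b : α → ℝ} {L : ℝ}
    (hp : ∀ n, 0 ≤ p n) (hc : ∀ n, 0 ≤ c n) (hcL : Tendsto c l (𝓝 L)) (hL : L ≠ 0)
    (hb : Tendsto b l (𝓝 0)) (hpcb : ∀ n, p n * c n ≤ b n) : Tendsto p l (𝓝 0) := by
  have hpc : Tendsto (fun n => p n * c n) l (𝓝 0) :=
    squeeze_zero (fun n => mul_nonneg (hp n) (hc n)) hpcb hb
  have hcancel : (fun n => p n * c n / c n) =ᶠ[l] p :=
    (hcL.eventually_ne hL).mono fun n hn => mul_div_cancel_right₀ _ hn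
  simpa using (hpc.div hcL hL).congr' hcancel

section Wedge

variable {ι : Type*}

/-- `‖u ∧ v‖²`, as a Gram determinant. -/
def wedgeNormSq [Fintype ι] (u v : ι → ℝ) : ℝ := (u ⬝ᵥ u) * (v ⬝ᵥ v) - (u ⬝ᵥ v) ^ 2

/-- Lagrange's identity. -/
lemma wedgeNormSq_eq_sum_sq [Fintype ι] (u v : ι → ℝ) :
    wedgeNormSq u v = (∑ i, ∑ j, (u i * v j - u j * v i) ^ 2) / 2 := by
  have hexpand : ∑ i, ∑ j, (u i * v j - u j * v i) ^ 2
      = ∑ i, ∑ j, u i ^ 2 * v j ^ 2 + ∑ i, ∑ j, u j ^ 2 * v i ^ 2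
        - 2 * ∑ i, ∑ j, u i * v i * (u j * v j) := by
    simp only [Finset.mul_sum, ← Finset.sum_add_distrib, ← Finset.sum_sub_distrib]
    exact Finset.sum_congr rfl fun i _ => Finset.sum_congr rfl fun j _ => by ring
  rw [hexpand, Finset.sum_comm (f := fun i j => u j ^ 2 * v i ^ 2), wedgeNormSq, dotProduct,
    dotProduct, dotProduct, sq (∑ i, u i * v i), Finset.sum_mul_sum, Finset.sum_mul_sum]
  simp only [← sq]
  ring

lemma mul_le_mul_of_ne_of_le_top_two {a : ι → ℝ} (ha : ∀ i, 0 ≤ a i) {i₀ i₁ : ι}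
    (htop : ∀ i, a i ≤ a i₀) (hsnd : ∀ i, i ≠ i₀ → a i ≤ a i₁) {i j : ι} (hij : i ≠ j) :
    a i * a j ≤ a i₀ * a i₁ := by
  rcases eq_or_ne i i₀ with rfl | hi
  · exact mul_le_mul_of_nonneg_left (hsnd j hij.symm) (ha i)
  · rw [mul_comm (a i₀)]
    exact mul_le_mul (hsnd i hi) (htop j) (ha j) ((ha i).trans (hsnd i hi))

lemma wedgeNormSq_diagonal_mulVec_le [Fintype ι] [DecidableEq ι] {a : ι → ℝ} (ha : ∀ i, 0 ≤ a i)
    {i₀ i₁ : ι} (htop : ∀ i, a i ≤ a i₀) (hsnd : ∀ i, i ≠ i₀ → a i ≤ a i₁) (u v : ι → ℝ) :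
    wedgeNormSq (diagonal a *ᵥ u) (diagonal a *ᵥ v) ≤ (a i₀ * a i₁) ^ 2 * wedgeNormSq u v := by
  rw [wedgeNormSq_eq_sum_sq, wedgeNormSq_eq_sum_sq, mul_div_assoc', Finset.mul_sum]
  gcongr with i
  rw [Finset.mul_sum]
  gcongr with j
  simp only [mulVec_diagonal]
  rcases eq_or_ne i j with rfl | hij
  · simp
  · calc (a i * u i * (a j * v j) - a j * u j * (a i * v i)) ^ 2
        = (a i * a j) ^ 2 * (u i * v j - u j * v i) ^ 2 := by ring
      _ ≤ (a i₀ * a i₁) ^ 2 * (u i * v j - u j * v i) ^ 2 :=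
        mul_le_mul_of_nonneg_right (pow_le_pow_left₀ (mul_nonneg (ha i) (ha j))
          (mul_le_mul_of_ne_of_le_top_two ha htop hsnd hij) 2) (sq_nonneg _)

lemma dotProduct_mulVec_mulVec_of_mem_orthogonalGroup [Fintype ι] [DecidableEq ι]
    {k : Matrix ι ι ℝ} (hk : k ∈ orthogonalGroup ι ℝ) (u v : ι → ℝ) :
    (k *ᵥ u) ⬝ᵥ (k *ᵥ v) = u ⬝ᵥ v := by
  rw [dotProduct_mulVec, vecMul_mulVec, (mem_orthogonalGroup_iff' ι ℝ).mp hk, vecMul_one]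

end Wedge

section ProjectiveDistance

variable {d : ℕ}

lemma inner_eu (u v : Fin d → ℝ) : ⟪eu d u, eu d v⟫ = u ⬝ᵥ v :=
  (EuclideanSpace.inner_toLp_toLp u v).trans (dotProduct_comm v u)

lemma norm_eu_sq (u : Fin d → ℝ) : ‖eu d u‖ ^ 2 = u ⬝ᵥ u := by
  rw [← real_inner_self_eq_norm_sq, inner_eu]

lemma norm_eu_pos {u : Fin d → ℝ} (hu : u ≠ 0) : 0 < ‖eu d u‖ :=
  norm_pos_iff.mpr fun h => hu (by simpa [eu] using h)

lemma abs_apply_le_norm_eu (u : Fin d → ℝ) (i : Fin d) : |u i| ≤ ‖eu d u‖ :=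
  PiLp.norm_apply_le (eu d u) i

lemma pdist_eq_sqrt_wedgeNormSq (u v : Fin d → ℝ) :
    pdist d u v = √(wedgeNormSq u v) / (‖eu d u‖ * ‖eu d v‖) := by
  rw [pdist, norm_eu_sq, norm_eu_sq, inner_eu, wedgeNormSq]

lemma pdist_nonneg (u v : Fin d → ℝ) : 0 ≤ pdist d u v := by
  rw [pdist]
  positivity

lemma norm_eu_mulVec_of_mem_orthogonalGroup {k : Matrix (Fin d) (Fin d) ℝ}
    (hk : k ∈ orthogonalGroup (Fin d) ℝ) (u : Fin d → ℝ) : ‖eu d (k *ᵥ u)‖ = ‖eu d u‖ := by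
  rw [← sq_eq_sq₀ (norm_nonneg _) (norm_nonneg _), norm_eu_sq, norm_eu_sq,
    dotProduct_mulVec_mulVec_of_mem_orthogonalGroup hk]

lemma pdist_mulVec_of_mem_orthogonalGroup {k : Matrix (Fin d) (Fin d) ℝ}
    (hk : k ∈ orthogonalGroup (Fin d) ℝ) (u v : Fin d → ℝ) :
    pdist d (k *ᵥ u) (k *ᵥ v) = pdist d u v := by
  rw [pdist_eq_sqrt_wedgeNormSq, pdist_eq_sqrt_wedgeNormSq, wedgeNormSq, wedgeNormSq,
    norm_eu_mulVec_of_mem_orthogonalGroup hk, norm_eu_mulVec_of_mem_orthogonalGroup hk]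
  simp only [dotProduct_mulVec_mulVec_of_mem_orthogonalGroup hk]

lemma mulVec_ne_zero_of_mem_orthogonalGroup {k : Matrix (Fin d) (Fin d) ℝ}
    (hk : k ∈ orthogonalGroup (Fin d) ℝ) {u : Fin d → ℝ} (hu : u ≠ 0) : k *ᵥ u ≠ 0 := by
  intro h
  have := norm_eu_mulVec_of_mem_orthogonalGroup hk u
  rw [h] at this
  exact hu (by simpa [eu] using this.symm)

lemma inner_eu_mulVec_of_mem_orthogonalGroup {k : Matrix (Fin d) (Fin d) ℝ}
    (hk : k ∈ orthogonalGroup (Fin d) ℝ) (u v : Fin d → ℝ) :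
    ⟪eu d (k *ᵥ u), eu d v⟫ = ⟪eu d (k⁻¹ *ᵥ v), eu d u⟫ := by
  rw [inner_eu, inner_eu, inv_eq_left_inv ((mem_orthogonalGroup_iff' _ ℝ).mp hk),
    dotProduct_comm (kᵀ *ᵥ v), dotProduct_transpose_mulVec, dotProduct_comm]

/-- The minors of `(a u, a v)` are those of `(u, v)` scaled by at most `a i₀ * a i₁`, while
`‖a u‖ ≥ a i₀ |u i₀|`. -/
lemma pdist_diagonal_mulVec_mul_le {a : Fin d → ℝ} (ha : ∀ i, 0 < a i) {i₀ i₁ : Fin d}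
    (htop : ∀ i, a i ≤ a i₀) (hsnd : ∀ i, i ≠ i₀ → a i ≤ a i₁)
    {u v : Fin d → ℝ} (hu : u ≠ 0) (hv : v ≠ 0) :
    pdist d (diagonal a *ᵥ u) (diagonal a *ᵥ v) * (|u i₀| / ‖eu d u‖) * (|v i₀| / ‖eu d v‖)
      ≤ a i₁ / a i₀ * pdist d u v := by
  have ha₀ := ha i₀
  have ha₁ := ha i₁
  have hne : ∀ {w : Fin d → ℝ}, w ≠ 0 → diagonal a *ᵥ w ≠ 0 := fun hw h =>
    hw (funext fun i => by simpa [mulVec_diagonal, (ha i).ne'] using congrFun h i)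
  have hwedge : √(wedgeNormSq (diagonal a *ᵥ u) (diagonal a *ᵥ v))
      ≤ a i₀ * a i₁ * √(wedgeNormSq u v) := by
    calc _ ≤ √((a i₀ * a i₁) ^ 2 * wedgeNormSq u v) := Real.sqrt_le_sqrt
          (wedgeNormSq_diagonal_mulVec_le (fun i => (ha i).le) htop hsnd u v)
      _ = _ := by rw [Real.sqrt_mul (sq_nonneg _), Real.sqrt_sq (by positivity)]
  have htop_coord : ∀ w : Fin d → ℝ, |w i₀| ≤ ‖eu d (diagonal a *ᵥ w)‖ / a i₀ := fun w => by
    rw [le_div_iff₀ ha₀]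
    calc |w i₀| * a i₀ = |(diagonal a *ᵥ w) i₀| := by
          rw [mulVec_diagonal, abs_mul, abs_of_pos ha₀, mul_comm]
      _ ≤ _ := abs_apply_le_norm_eu _ _
  have := norm_eu_pos hu
  have := norm_eu_pos hv
  have := norm_eu_pos (hne hu)
  have := norm_eu_pos (hne hv)
  rw [pdist_eq_sqrt_wedgeNormSq, pdist_eq_sqrt_wedgeNormSq]
  calc _ = √(wedgeNormSq (diagonal a *ᵥ u) (diagonal a *ᵥ v)) * (|u i₀| * |v i₀|)
        / (‖eu d (diagonal a *ᵥ u)‖ * ‖eu d (diagonal a *ᵥ v)‖ * (‖eu d u‖ * ‖eu d v‖)) := by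
        field_simp
    _ ≤ a i₀ * a i₁ * √(wedgeNormSq u v)
          * (‖eu d (diagonal a *ᵥ u)‖ / a i₀ * (‖eu d (diagonal a *ᵥ v)‖ / a i₀))
        / (‖eu d (diagonal a *ᵥ u)‖ * ‖eu d (diagonal a *ᵥ v)‖ * (‖eu d u‖ * ‖eu d v‖)) := by
        gcongr ?_ * (?_ * ?_) / _
        exacts [htop_coord u, htop_coord v]
    _ = _ := by field_simp

lemma pdist_kak_mulVec_mul_le {k k' : Matrix (Fin d) (Fin d) ℝ}
    (hk : k ∈ orthogonalGroup (Fin d) ℝ) (hk' : k' ∈ orthogonalGroup (Fin d) ℝ)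
    {a : Fin d → ℝ} (ha : ∀ i, 0 < a i) {i₀ i₁ : Fin d}
    (htop : ∀ i, a i ≤ a i₀) (hsnd : ∀ i, i ≠ i₀ → a i ≤ a i₁)
    {u v : Fin d → ℝ} (hu : u ≠ 0) (hv : v ≠ 0) :
    pdist d ((k * diagonal a * k') *ᵥ u) ((k * diagonal a * k') *ᵥ v)
        * (|(k' *ᵥ u) i₀| / ‖eu d u‖) * (|(k' *ᵥ v) i₀| / ‖eu d v‖)
      ≤ a i₁ / a i₀ * pdist d u v := by
  simp only [← mulVec_mulVec, pdist_mulVec_of_mem_orthogonalGroup hk,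
    ← norm_eu_mulVec_of_mem_orthogonalGroup hk' u, ← norm_eu_mulVec_of_mem_orthogonalGroup hk' v,
    ← pdist_mulVec_of_mem_orthogonalGroup hk' u v]
  exact pdist_diagonal_mulVec_mul_le ha htop hsnd (mulVec_ne_zero_of_mem_orthogonalGroup hk' hu)
    (mulVec_ne_zero_of_mem_orthogonalGroup hk' hv)

lemma tendsto_inner_eu_mulVec {ι : Type*} {l : Filter ι} {k : ι → Matrix (Fin d) (Fin d) ℝ}
    (hk : ∀ n, k n ∈ orthogonalGroup (Fin d) ℝ) {e z : Fin d → ℝ}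
    (hconv : Tendsto (fun n => eu d ((k n)⁻¹ *ᵥ e)) l (𝓝 (eu d z))) (w : Fin d → ℝ) :
    Tendsto (fun n => ⟪eu d (k n *ᵥ w), eu d e⟫) l (𝓝 ⟪eu d z, eu d w⟫) := by
  simp only [inner_eu_mulVec_of_mem_orthogonalGroup (hk _)]
  exact hconv.inner tendsto_const_nhds

end ProjectiveDistance

theorem stmt14_general (d : ℕ) (hd : 1 < d)
    (f k k' : ℕ → Matrix (Fin d) (Fin d) ℝ) (α : ℕ → Fin d → ℝ)
    (hk : ∀ n, k n ∈ Matrix.orthogonalGroup (Fin d) ℝ)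
    (hk' : ∀ n, k' n ∈ Matrix.orthogonalGroup (Fin d) ℝ)
    (hf : ∀ n, f n = k n * Matrix.diagonal (α n) * k' n)
    (hpos : ∀ n i, 0 < α n i)
    (hmono : ∀ n, ∀ i j : Fin d, i ≤ j → α n j ≤ α n i)
    (hlittleo : ∀ i : Fin d, i ≠ ⟨0, Nat.lt_of_lt_of_le Nat.zero_lt_one hd.le⟩ →
      Tendsto (fun n => α n i / α n ⟨0, Nat.lt_of_lt_of_le Nat.zero_lt_one hd.le⟩)
        atTop (𝓝 0))
    (z : Fin d → ℝ)
    (hconv : Tendsto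
      (fun n => eu d ((k' n)⁻¹.mulVec (Pi.single ⟨0, Nat.lt_of_lt_of_le Nat.zero_lt_one hd.le⟩ 1)))
      atTop (𝓝 (eu d z)))
    (x y : Fin d → ℝ)
    (hzx : ⟪eu d z, eu d x⟫ ≠ 0) (hzy : ⟪eu d z, eu d y⟫ ≠ 0) :
    Tendsto (fun n => pdist d ((f n).mulVec x) ((f n).mulVec y)) atTop (𝓝 0) ∧
    ∀ n : ℕ,
      pdist d ((f n).mulVec x) ((f n).mulVec y) *
        (|⟪eu d ((k' n).mulVec x), eu d (Pi.single ⟨0, Nat.lt_of_lt_of_le Nat.zero_lt_one hd.le⟩ 1)⟫| / ‖eu d x‖) *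
        (|⟪eu d ((k' n).mulVec y), eu d (Pi.single ⟨0, Nat.lt_of_lt_of_le Nat.zero_lt_one hd.le⟩ 1)⟫| / ‖eu d y‖) ≤
      (d : ℝ) ^ 2 * (α n ⟨1, hd⟩ / α n ⟨0, Nat.lt_of_lt_of_le Nat.zero_lt_one hd.le⟩) *
        pdist d x y := by
  set i₀ : Fin d := ⟨0, Nat.lt_of_lt_of_le Nat.zero_lt_one hd.le⟩
  set i₁ : Fin d := ⟨1, hd⟩
  have hx : x ≠ 0 := by rintro rfl; simp [eu] at hzx
  have hy : y ≠ 0 := by rintro rfl; simp [eu] at hzy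
  have htop : ∀ n i, α n i ≤ α n i₀ := fun n i => hmono n i₀ i (Nat.zero_le _)
  have hsnd : ∀ n i, i ≠ i₀ → α n i ≤ α n i₁ := fun n i hi =>
    hmono n i₁ i (Nat.one_le_iff_ne_zero.mpr fun h => hi (Fin.ext h))
  have hbound : ∀ n, pdist d (f n *ᵥ x) (f n *ᵥ y)
      * (|⟪eu d (k' n *ᵥ x), eu d (Pi.single i₀ 1)⟫| / ‖eu d x‖)
      * (|⟪eu d (k' n *ᵥ y), eu d (Pi.single i₀ 1)⟫| / ‖eu d y‖)
      ≤ α n i₁ / α n i₀ * pdist d x y := fun n => by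
    simpa only [inner_eu, dotProduct_single_one, hf n] using
      pdist_kak_mulVec_mul_le (hk n) (hk' n) (hpos n) (htop n) (hsnd n) hx hy
  have hratio : Tendsto (fun n => α n i₁ / α n i₀ * pdist d x y) atTop (𝓝 0) := by
    simpa using (hlittleo i₁ (by simp [i₀, i₁, Fin.ext_iff])).mul_const (pdist d x y)
  have hcoeff := ((tendsto_inner_eu_mulVec hk' hconv x).abs.div_const ‖eu d x‖).mul
    ((tendsto_inner_eu_mulVec hk' hconv y).abs.div_const ‖eu d y‖)
  refine ⟨tendsto_zero_of_mul_le (fun n => pdist_nonneg _ _) (fun n => by positivity) hcoeff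
    (mul_ne_zero (div_ne_zero (abs_ne_zero.mpr hzx) (norm_eu_pos hx).ne')
      (div_ne_zero (abs_ne_zero.mpr hzy) (norm_eu_pos hy).ne'))
    hratio (fun n => (mul_assoc _ _ _).symm.trans_le (hbound n)), fun n => (hbound n).trans ?_⟩
  rw [mul_assoc]
  refine le_mul_of_one_le_left (mul_nonneg (div_pos (hpos n i₁) (hpos n i₀)).le
    (pdist_nonneg x y)) (one_le_pow₀ ?_)
  exact_mod_cast hd.le

/-- With `f_n = k_n a_n k'_n` in KAK form, `a_n^i = o(a_n^1)` for `i > 1` and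
`k'_n⁻¹e_1 → z`: for nonzero `x, y` with `⟨z,x⟩ ≠ 0 ≠ ⟨z,y⟩` one has
`δ(f_n·[x], f_n·[y]) → 0`, and for all `n` the bound
`δ(f_n·[x], f_n·[y]) · |⟨k'_n x/‖x‖, e₁⟩| · |⟨k'_n y/‖y‖, e₁⟩| ≤ d² (a_n²/a_n¹) δ([x],[y])`
(the division by the inner products being moved to the left-hand side). -/
theorem stmt14 (d : ℕ) (hd : 1 < d)
    (f k k' : ℕ → Matrix (Fin d) (Fin d) ℝ) (α : ℕ → Fin d → ℝ)
    (hk : ∀ n, k n ∈ Matrix.orthogonalGroup (Fin d) ℝ)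
    (hk' : ∀ n, k' n ∈ Matrix.orthogonalGroup (Fin d) ℝ)
    (hf : ∀ n, f n = k n * Matrix.diagonal (α n) * k' n)
    (hpos : ∀ n i, 0 < α n i)
    (hmono : ∀ n, ∀ i j : Fin d, i ≤ j → α n j ≤ α n i)
    (hlittleo : ∀ i : Fin d, i ≠ ⟨0, Nat.lt_of_lt_of_le Nat.zero_lt_one hd.le⟩ →
      Tendsto (fun n => α n i / α n ⟨0, Nat.lt_of_lt_of_le Nat.zero_lt_one hd.le⟩)
        atTop (𝓝 0))
    (z : Fin d → ℝ) (hz : ‖eu d z‖ = 1)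
    (hconv : Tendsto
      (fun n => eu d ((k' n)⁻¹.mulVec (Pi.single ⟨0, Nat.lt_of_lt_of_le Nat.zero_lt_one hd.le⟩ 1)))
      atTop (𝓝 (eu d z)))
    (x y : Fin d → ℝ) (hx : x ≠ 0) (hy : y ≠ 0)
    (hzx : ⟪eu d z, eu d x⟫ ≠ 0) (hzy : ⟪eu d z, eu d y⟫ ≠ 0) :
    Tendsto (fun n => pdist d ((f n).mulVec x) ((f n).mulVec y)) atTop (𝓝 0) ∧
    ∀ n : ℕ,
      pdist d ((f n).mulVec x) ((f n).mulVec y) *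
        (|⟪eu d ((k' n).mulVec x), eu d (Pi.single ⟨0, Nat.lt_of_lt_of_le Nat.zero_lt_one hd.le⟩ 1)⟫| / ‖eu d x‖) *
        (|⟪eu d ((k' n).mulVec y), eu d (Pi.single ⟨0, Nat.lt_of_lt_of_le Nat.zero_lt_one hd.le⟩ 1)⟫| / ‖eu d y‖) ≤
      (d : ℝ) ^ 2 * (α n ⟨1, hd⟩ / α n ⟨0, Nat.lt_of_lt_of_le Nat.zero_lt_one hd.le⟩) *
        pdist d x y :=
  stmt14_general d hd f k k' α hk hk' hf hpos hmono hlittleo z hconv x y hzx hzy
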